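/- arXiv:1901.10255 — 4 statements merged into one kernel-verified Lean document; each statement's English description precedes it below -/
import Mathlib

section
/- Let c₁,...,cₙ be i.i.d. real random variables with c_j ~ N(0, σ²), let d₁,...,dₙ be i.i.d. uniform on {−1, +1} independent of the c_j, let C = circ(c₁,...,cₙ), D = diag(d₁,...,dₙ), and let u ∈ ℝⁿ be a fixed vector. Define y = DCu. Then for i ≠ i′, cov(y_i, y_{i′}) = 0, and for every i, var(y_i) = σ² · Σ_j u_j². -/
open MeasureTheory ProbabilityTheory
open scoped ENNReal NNReal

/-- Covariance of two real random variables: `E[XY] − E[X]E[Y]`. -/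
noncomputable def rcov {Ω : Type*} [MeasurableSpace Ω] (X Y : Ω → ℝ) (μ : Measure Ω) : ℝ :=
  (∫ ω, X ω * Y ω ∂μ) - (∫ ω, X ω ∂μ) * (∫ ω, Y ω ∂μ)

/-!
Write `y i = ∑ j, u j * X (j - i) j` with `X a j = c a * d j`. The Gaussian block is independent
of the sign block and each block is centred and independent, so
`E[X a j * X b k] = E[c a * c b] * E[d j * d k] = σ² [a = b] [j = k]` and `E[X a j] = 0`.
Expanding `E[y i * y i']` bilinearly, only the terms with `j = k` and `j - i = j - i'` survive;
they exist only for `i = i'` and then contribute `σ² ∑ j, u j ^ 2`.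
-/

noncomputable def rademacher : Measure ℝ := (2 : ℝ≥0∞)⁻¹ • (Measure.dirac (-1) + Measure.dirac 1)

lemma ae_mul_self_eq_one_rademacher : ∀ᵐ x ∂rademacher, x * x = 1 := by
  simp [rademacher]

lemma integral_id_rademacher : ∫ x, x ∂rademacher = 0 := by
  rw [rademacher, integral_smul_measure, integral_add_measure (integrable_dirac (by simp))
    (integrable_dirac (by simp)), integral_dirac, integral_dirac]
  norm_num

namespace ProbabilityTheory

variable {Ω : Type*} [MeasurableSpace Ω] {μ : Measure Ω} {X : Ω → ℝ}

lemma HasLaw.ae_mul_self_eq_one (hX : HasLaw X rademacher μ) : ∀ᵐ ω ∂μ, X ω * X ω = 1 :=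
  (hX.ae_iff (by fun_prop)).2 ae_mul_self_eq_one_rademacher

lemma HasLaw.integral_eq_zero_of_rademacher (hX : HasLaw X rademacher μ) : μ[X] = 0 :=
  hX.integral_eq.trans integral_id_rademacher

lemma HasLaw.memLp_top_of_rademacher (hX : HasLaw X rademacher μ) : MemLp X ∞ μ := by
  refine memLp_top_of_bound hX.aemeasurable.aestronglyMeasurable 1 ?_
  filter_upwards [hX.ae_mul_self_eq_one] with ω h
  rw [Real.norm_eq_abs, ← Real.sqrt_sq_eq_abs, sq, h, Real.sqrt_one]

lemma HasLaw.integral_mul_self_of_rademacher [IsProbabilityMeasure μ]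
    (hX : HasLaw X rademacher μ) : ∫ ω, X ω * X ω ∂μ = 1 := by
  rw [integral_congr_ae hX.ae_mul_self_eq_one, integral_const, probReal_univ, one_smul]

lemma HasLaw.integral_eq_zero_of_gaussianReal {v : ℝ≥0} (hX : HasLaw X (gaussianReal 0 v) μ) :
    μ[X] = 0 :=
  hX.integral_eq.trans integral_id_gaussianReal

lemma HasLaw.integral_mul_self_of_gaussianReal {v : ℝ≥0} (hX : HasLaw X (gaussianReal 0 v) μ) :
    ∫ ω, X ω * X ω ∂μ = v := by
  simp_rw [← sq,
    ← variance_of_integral_eq_zero hX.aemeasurable hX.integral_eq_zero_of_gaussianReal,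
    hX.variance_eq, variance_id_gaussianReal]

lemma iIndepFun.integral_mul_eq_ite {ι : Type*} [DecidableEq ι] {f : ι → Ω → ℝ}
    (h : iIndepFun f μ) (hm : ∀ i, AEStronglyMeasurable (f i) μ) (h0 : ∀ i, μ[f i] = 0)
    {v : ℝ} (hv : ∀ i, ∫ ω, f i ω * f i ω ∂μ = v) (i j : ι) :
    ∫ ω, f i ω * f j ω ∂μ = if i = j then v else 0 := by
  split_ifs with hij
  · rw [hij, hv]
  · rw [(h.indepFun hij).integral_fun_mul_eq_mul_integral (hm i) (hm j), h0, zero_mul]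

end ProbabilityTheory

lemma integral_sum_mul_sum {Ω ι κ : Type*} [MeasurableSpace Ω] {μ : Measure Ω} {s : Finset ι}
    {t : Finset κ} {X : ι → Ω → ℝ} {Y : κ → Ω → ℝ}
    (h : ∀ j ∈ s, ∀ k ∈ t, Integrable (fun ω ↦ X j ω * Y k ω) μ) :
    ∫ ω, (∑ j ∈ s, X j ω) * (∑ k ∈ t, Y k ω) ∂μ = ∑ j ∈ s, ∑ k ∈ t, ∫ ω, X j ω * Y k ω ∂μ := by
  simp_rw [Finset.sum_mul_sum]
  rw [integral_finsetSum _ fun j hj ↦ integrable_finsetSum _ fun k hk ↦ h j hj k hk]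
  exact Finset.sum_congr rfl fun j hj ↦ integral_finsetSum _ fun k hk ↦ h j hj k hk

section GaussianTimesSign

variable {Ω ι κ : Type*} [MeasurableSpace Ω] {μ : Measure Ω}
  {c : ι → Ω → ℝ} {d : κ → Ω → ℝ} {σ2 : ℝ≥0}

lemma memLp_two_gaussian_mul_sign {a : ι} {j : κ} (hc : HasLaw (c a) (gaussianReal 0 σ2) μ)
    (hd : HasLaw (d j) rademacher μ) : MemLp (fun ω ↦ c a ω * d j ω) 2 μ :=
  hd.memLp_top_of_rademacher.mul hc.hasGaussianLaw.memLp_two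

variable (hc : ∀ a, HasLaw (c a) (gaussianReal 0 σ2) μ) (hd : ∀ j, HasLaw (d j) rademacher μ)
  (hindep : iIndepFun (Sum.elim c d) μ)
include hc hd hindep

lemma integral_gaussian_mul_sign (a : ι) (j : κ) : ∫ ω, c a ω * d j ω ∂μ = 0 := by
  have hcd : IndepFun (c a) (d j) μ := hindep.indepFun (Sum.inl_ne_inr (a := a) (b := j))
  rw [hcd.integral_fun_mul_eq_mul_integral (hc a).aemeasurable.aestronglyMeasurable
    (hd j).aemeasurable.aestronglyMeasurable, (hc a).integral_eq_zero_of_gaussianReal, zero_mul]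

lemma integral_gaussian_mul_sign_mul [IsProbabilityMeasure μ] [DecidableEq ι] [DecidableEq κ]
    (a b : ι) (j k : κ) :
    ∫ ω, (c a ω * d j ω) * (c b ω * d k ω) ∂μ = if a = b ∧ j = k then (σ2 : ℝ) else 0 := by
  have hm : ∀ p, AEMeasurable (Sum.elim c d p) μ :=
    Sum.forall.2 ⟨fun a ↦ (hc a).aemeasurable, fun j ↦ (hd j).aemeasurable⟩
  have hsplit : IndepFun (c a * c b) (d j * d k) μ :=
    hindep.indepFun_mul_mul₀ hm (.inl a) (.inl b) (.inr j) (.inr k) Sum.inl_ne_inr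
      Sum.inl_ne_inr Sum.inl_ne_inr Sum.inl_ne_inr
  have hcc := (hindep.precomp Sum.inl_injective).integral_mul_eq_ite
    (fun a ↦ (hc a).aemeasurable.aestronglyMeasurable)
    (fun a ↦ (hc a).integral_eq_zero_of_gaussianReal)
    (fun a ↦ (hc a).integral_mul_self_of_gaussianReal) a b
  have hdd := (hindep.precomp Sum.inr_injective).integral_mul_eq_ite
    (fun j ↦ (hd j).aemeasurable.aestronglyMeasurable)
    (fun j ↦ (hd j).integral_eq_zero_of_rademacher)
    (fun j ↦ (hd j).integral_mul_self_of_rademacher) j k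
  calc ∫ ω, (c a ω * d j ω) * (c b ω * d k ω) ∂μ = ∫ ω, (c a * c b) ω * (d j * d k) ω ∂μ := by
        congr 1 with ω; simp only [Pi.mul_apply]; ring
    _ = (∫ ω, c a ω * c b ω ∂μ) * ∫ ω, d j ω * d k ω ∂μ :=
        hsplit.integral_fun_mul_eq_mul_integral
          ((hc a).aemeasurable.mul (hc b).aemeasurable).aestronglyMeasurable
          ((hd j).aemeasurable.mul (hd k).aemeasurable).aestronglyMeasurable
    _ = if a = b ∧ j = k then (σ2 : ℝ) else 0 := by
        simp only [Sum.elim_inl, Sum.elim_inr] at hcc hdd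
        rw [hcc, hdd]
        split_ifs <;> simp_all

end GaussianTimesSign

section Circulant

variable {Ω G : Type*} [MeasurableSpace Ω] {μ : Measure Ω} [IsProbabilityMeasure μ]
  [AddGroup G] [Fintype G] {c d : G → Ω → ℝ} {σ2 : ℝ≥0} (u : G → ℝ)
  (hc : ∀ a, HasLaw (c a) (gaussianReal 0 σ2) μ) (hd : ∀ j, HasLaw (d j) rademacher μ)
  (hindep : iIndepFun (Sum.elim c d) μ)
include hc hd hindep

lemma integral_sum_gaussian_mul_sign (i : G) :
    ∫ ω, ∑ j, c (j - i) ω * u j * d j ω ∂μ = 0 := by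
  simp_rw [mul_right_comm _ (u _)]
  rw [integral_finsetSum _ fun j _ ↦
    ((memLp_two_gaussian_mul_sign (hc _) (hd j)).integrable one_le_two).mul_const (u j)]
  simp [integral_mul_const, integral_gaussian_mul_sign hc hd hindep]

lemma integral_sum_gaussian_mul_sign_mul_sum [DecidableEq G] (i i' : G) :
    ∫ ω, (∑ j, c (j - i) ω * u j * d j ω) * (∑ k, c (k - i') ω * u k * d k ω) ∂μ
      = if i = i' then (σ2 : ℝ) * ∑ j, u j ^ 2 else 0 := by
  simp_rw [mul_right_comm _ (u _)]
  rw [integral_sum_mul_sum fun j _ k _ ↦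
    ((memLp_two_gaussian_mul_sign (hc _) (hd j)).mul_const (u j)).integrable_mul
      ((memLp_two_gaussian_mul_sign (hc _) (hd k)).mul_const (u k))]
  simp_rw [mul_mul_mul_comm _ (u _), integral_mul_const,
    integral_gaussian_mul_sign_mul hc hd hindep]
  calc ∑ j, ∑ k, (if j - i = k - i' ∧ j = k then (σ2 : ℝ) else 0) * (u j * u k)
      = ∑ j, (if i = i' then (σ2 : ℝ) else 0) * (u j * u j) := by
        refine Finset.sum_congr rfl fun j _ ↦ ?_
        rw [Finset.sum_eq_single j (fun k _ hkj ↦ by simp [Ne.symm hkj]) (by simp)]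
        simp
    _ = if i = i' then (σ2 : ℝ) * ∑ j, u j ^ 2 else 0 := by
        split_ifs <;> simp [Finset.mul_sum, sq]

end Circulant

/-- With `C = circ(c)` for i.i.d. Gaussian `c_j ~ N(0,σ²)`, `D = diag(d)` for i.i.d.
uniform signs `d_j ∈ {−1,1}` independent of `c`, and a fixed vector `u`, the vector
`y = DCu` (with `y_i = Σ_j c_{(j−i) mod n} u_j d_j`) has uncorrelated coordinates with
`var(y_i) = σ² Σ_j u_j²`. -/
theorem diag_circ_gaussian_cov {Ω : Type*} [MeasurableSpace Ω] (μ : Measure Ω)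
    [IsProbabilityMeasure μ] (n : ℕ) [NeZero n]
    (c d : Fin n → Ω → ℝ) (σ2 : ℝ≥0) (u : Fin n → ℝ)
    (hcm : ∀ j, Measurable (c j)) (hdm : ∀ j, Measurable (d j))
    (hc : ∀ j, Measure.map (c j) μ = gaussianReal 0 σ2)
    (hd : ∀ j, Measure.map (d j) μ =
      (2 : ℝ≥0∞)⁻¹ • (Measure.dirac (-1) + Measure.dirac 1))
    (hindep : iIndepFun
      (Sum.elim c d) μ)
    (y : Fin n → Ω → ℝ)
    (hy : ∀ i, y i = fun ω => ∑ j : Fin n, c (j - i) ω * u j * d j ω) :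
    (∀ i i' : Fin n, i ≠ i' → rcov (y i) (y i') μ = 0) ∧
      (∀ i : Fin n, variance (y i) μ = (σ2 : ℝ) * ∑ j, u j ^ 2) := by
  have hcl (j : Fin n) : HasLaw (c j) (gaussianReal 0 σ2) μ := ⟨(hcm j).aemeasurable, hc j⟩
  have hdl (j : Fin n) : HasLaw (d j) rademacher μ := ⟨(hdm j).aemeasurable, hd j⟩
  have hmean (i : Fin n) : ∫ ω, y i ω ∂μ = 0 := by
    rw [hy]
    exact integral_sum_gaussian_mul_sign u hcl hdl hindep i
  have hsecond (i i' : Fin n) :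
      ∫ ω, y i ω * y i' ω ∂μ = if i = i' then (σ2 : ℝ) * ∑ j, u j ^ 2 else 0 := by
    rw [hy, hy]
    exact integral_sum_gaussian_mul_sign_mul_sum u hcl hdl hindep i i'
  refine ⟨fun i i' hii' ↦ ?_, fun i ↦ ?_⟩
  · rw [rcov, hsecond, if_neg hii', hmean, zero_mul, sub_zero]
  · have hym : AEMeasurable (y i) μ := by
      rw [hy]
      fun_prop
    rw [variance_of_integral_eq_zero hym (hmean i)]
    simpa only [sq, if_pos] using hsecond i i
end

section
/- Let x₁,...,xₙ be real random variables each with a law symmetric about 0, let u_j = ReLU(x_j), and let c₁,...,cₙ ~ N(0,σ²) i.i.d., d₁,...,dₙ uniform on {−1,1} i.i.d., all mutually independent (also independent of the x's). Define y = DCu with C = circ(c), D = diag(d). Then for i ≠ i′, cov(y_i, y_{i′}) = 0, and var(y_i) = (σ²/2)·Σ_j var(x_j). -/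
/-!
Expanding `E[y_i y_i']` gives a sum over pairs `(j, k)` of expectations of monomials in the
independent family `(c, d, u)`, `u_j = max 0 x_j`, and each of them factorises into moments of
single coordinates. Since the `c_a` and `d_j` are centred, a monomial in which one of them occurs
exactly once has expectation zero; this kills the pair `(j, k)` unless `j = k` and
`j - i = j - i'`, so only `i = i'` leaves surviving terms, each equal to
`E[c²] E[u_j²] E[d_j²] = σ² E[u_j²]`. Finally the symmetry of `x_j` gives `E[x_j] = 0` and
`E[(max 0 x_j)²] = E[(max 0 (-x_j))²] = E[x_j²] / 2`.
-/

open MeasureTheory ProbabilityTheory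
open scoped ENNReal NNReal

section Moments

variable {Ω : Type*} [MeasurableSpace Ω] {μ : Measure Ω}

theorem integrable_inv_two_smul_dirac_add_dirac {α : Type*} [MeasurableSpace α]
    [MeasurableSingletonClass α] (f : α → ℝ) (a b : α) :
    Integrable f ((2 : ℝ≥0∞)⁻¹ • (Measure.dirac a + Measure.dirac b)) :=
  ((integrable_dirac (by simp)).add_measure (integrable_dirac (by simp))).smul_measure (by simp)

theorem integral_inv_two_smul_dirac_add_dirac {α : Type*} [MeasurableSpace α]
    [MeasurableSingletonClass α] (f : α → ℝ) (a b : α) :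
    ∫ x, f x ∂((2 : ℝ≥0∞)⁻¹ • (Measure.dirac a + Measure.dirac b)) =
      (f a + f b) / 2 := by
  rw [integral_smul_measure, integral_add_measure (integrable_dirac (by simp))
    (integrable_dirac (by simp)), integral_dirac, integral_dirac]
  simp [div_eq_inv_mul]

theorem ProbabilityTheory.HasLaw.memLp_two {X : Ω → ℝ} {ν : Measure ℝ} (hX : HasLaw X ν μ)
    (hν : Integrable (fun x => x ^ 2) ν) : MemLp X 2 μ := by
  rw [← hX.map_eq] at hν
  exact (memLp_two_iff_integrable_sq hX.aemeasurable.aestronglyMeasurable).2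
    ((integrable_map_measure (by fun_prop) hX.aemeasurable).1 hν)

theorem ProbabilityTheory.HasLaw.integral_sq_of_gaussianReal {X : Ω → ℝ} {v : ℝ≥0}
    (hX : HasLaw X (gaussianReal 0 v) μ) : ∫ ω, X ω ^ 2 ∂μ = v := by
  rw [← variance_of_integral_eq_zero hX.aemeasurable
    (hX.integral_eq.trans integral_id_gaussianReal), hX.variance_eq, variance_id_gaussianReal]

theorem ProbabilityTheory.HasLaw.integral_comp_of_inv_two_smul_dirac_add_dirac {X : Ω → ℝ}
    {a b : ℝ} (hX : HasLaw X ((2 : ℝ≥0∞)⁻¹ • (Measure.dirac a + Measure.dirac b)) μ)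
    {f : ℝ → ℝ} (hf : Measurable f) :
    ∫ ω, f (X ω) ∂μ = (f a + f b) / 2 :=
  (hX.integral_comp hf.aestronglyMeasurable).trans (integral_inv_two_smul_dirac_add_dirac f a b)

theorem integral_comp_eq_integral_comp_neg_of_map_eq {X : Ω → ℝ} (hX : AEMeasurable X μ)
    (hsymm : μ.map X = μ.map (fun ω => -X ω)) {f : ℝ → ℝ} (hf : Measurable f) :
    ∫ ω, f (X ω) ∂μ = ∫ ω, f (-X ω) ∂μ := by
  rw [← integral_map hX hf.aestronglyMeasurable, hsymm,
    integral_map (φ := fun ω => -X ω) hX.neg hf.aestronglyMeasurable]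

theorem MeasureTheory.MemLp.zero_max {f : Ω → ℝ} {p : ℝ≥0∞} (hf : MemLp f p μ) :
    MemLp (fun ω => max 0 (f ω)) p μ := by
  simpa only [max_comm] using hf.pos_part

theorem integral_max_zero_sq_eq_variance_div_two [IsProbabilityMeasure μ] {X : Ω → ℝ}
    (hsymm : μ.map X = μ.map (fun ω => -X ω)) (hX : MemLp X 2 μ) :
    ∫ ω, max 0 (X ω) ^ 2 ∂μ = Var[X; μ] / 2 := by
  have hXm := hX.aestronglyMeasurable.aemeasurable
  have hmean : ∫ ω, X ω ∂μ = 0 := by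
    have := integral_comp_eq_integral_comp_neg_of_map_eq hXm hsymm measurable_id
    simp only [id, integral_neg] at this
    linarith
  have hreflect : ∫ ω, max 0 (-X ω) ^ 2 ∂μ = ∫ ω, max 0 (X ω) ^ 2 ∂μ :=
    (integral_comp_eq_integral_comp_neg_of_map_eq hXm hsymm (f := fun t => max 0 t ^ 2)
      (by fun_prop)).symm
  have hsplit (t : ℝ) : max 0 t ^ 2 + max 0 (-t) ^ 2 = t ^ 2 := by
    rcases le_total t 0 with ht | ht <;> simp [ht]
  rw [variance_of_integral_eq_zero hXm hmean]
  simp_rw [← hsplit (X _)]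
  rw [integral_add hX.zero_max.integrable_sq
    (MemLp.zero_max (f := fun ω => -X ω) hX.neg).integrable_sq, hreflect]
  ring

theorem MeasureTheory.MemLp.integrable_pow_of_le_two [IsFiniteMeasure μ] {f : Ω → ℝ}
    (hf : MemLp f 2 μ) {k : ℕ} (hk : k ≤ 2) : Integrable (fun ω => f ω ^ k) μ := by
  interval_cases k
  · simp
  · simpa using hf.integrable one_le_two
  · exact hf.integrable_sq

end Moments

namespace ProbabilityTheory

variable {Ω ι : Type*} [MeasurableSpace Ω] {μ : Measure Ω} {g : ι → Ω → ℝ}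

theorem iIndepFun.integral_fun_finsetProd (hg : iIndepFun g μ)
    (hgm : ∀ t, AEStronglyMeasurable (g t) μ) (S : Finset ι) :
    ∫ ω, ∏ t ∈ S, g t ω ∂μ = ∏ t ∈ S, ∫ ω, g t ω ∂μ := by
  simp_rw [← Finset.prod_coe_sort S]
  exact (hg.precomp Subtype.val_injective).integral_fun_prod_eq_prod_integral fun t => hgm t

theorem iIndepFun.integrable_fun_finsetProd (hg : iIndepFun g μ)
    (hgm : ∀ t, Measurable (g t)) (hint : ∀ t, Integrable (g t) μ) (S : Finset ι) :
    Integrable (fun ω => ∏ t ∈ S, g t ω) μ := by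
  refine ⟨Finset.aestronglyMeasurable_fun_prod S fun t _ => (hgm t).aestronglyMeasurable, ?_⟩
  simp only [HasFiniteIntegral, enorm_eq_nnnorm, nnnorm_prod, ENNReal.ofNNReal_finsetProd]
  rw [lintegral_prod_eq_prod_lintegral_of_indepFun S (fun t ω => (‖g t ω‖₊ : ℝ≥0∞))
    (hg.comp (fun _ r => (‖r‖₊ : ℝ≥0∞)) fun _ => by fun_prop) fun t => by fun_prop]
  exact ENNReal.prod_lt_top fun t _ => (hint t).2

variable [DecidableEq ι]

theorem iIndepFun.integral_multisetProd (hg : iIndepFun g μ) (hgm : ∀ t, Measurable (g t))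
    (s : Multiset ι) :
    ∫ ω, (s.map (g · ω)).prod ∂μ = ∏ t ∈ s.toFinset, ∫ ω, g t ω ^ s.count t ∂μ := by
  simp_rw [Finset.prod_multiset_map_count]
  exact (hg.comp (fun t r => r ^ s.count t) fun t => by fun_prop).integral_fun_finsetProd
    (fun t => ((hgm t).pow_const _).aestronglyMeasurable) _

theorem iIndepFun.integral_multisetProd_eq_zero (hg : iIndepFun g μ)
    (hgm : ∀ t, Measurable (g t)) {s : Multiset ι} {t : ι} (hst : s.count t = 1)
    (ht : ∫ ω, g t ω ∂μ = 0) :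
    ∫ ω, (s.map (g · ω)).prod ∂μ = 0 := by
  rw [hg.integral_multisetProd hgm]
  have hts : t ∈ s.toFinset := by
    rw [Multiset.mem_toFinset, ← Multiset.count_pos, hst]
    exact one_pos
  exact Finset.prod_eq_zero hts (by simpa [hst] using ht)

theorem iIndepFun.integrable_multisetProd (hg : iIndepFun g μ)
    (hgm : ∀ t, Measurable (g t)) (hL2 : ∀ t, MemLp (g t) 2 μ) {s : Multiset ι}
    (hs : ∀ t, s.count t ≤ 2) :
    Integrable (fun ω => (s.map (g · ω)).prod) μ := by
  have := hg.isProbabilityMeasure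
  simp_rw [Finset.prod_multiset_map_count]
  exact (hg.comp (fun t r => r ^ s.count t) fun t => by fun_prop).integrable_fun_finsetProd
    (fun t => (hgm t).pow_const _) (fun t => (hL2 t).integrable_pow_of_le_two (hs t)) _

section DiagCirc

variable {Ω G : Type*} {c d u : G → Ω → ℝ}

def diagCirc [AddGroup G] [Fintype G] (c d u : G → Ω → ℝ) (i : G) (ω : Ω) : ℝ :=
  ∑ j, c (j - i) ω * u j ω * d j ω

namespace diagCirc

def termVars (a j : G) : Multiset (G ⊕ (G ⊕ G)) :=
  {.inl a, .inr (.inr j), .inr (.inl j)}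

theorem mul_mul_eq_prod_termVars (a j : G) (ω : Ω) :
    c a ω * u j ω * d j ω = ((termVars a j).map (Sum.elim c (Sum.elim d u) · ω)).prod := by
  simp [termVars, mul_assoc]

theorem count_termVars_le_one [DecidableEq G] (a j : G) (t : G ⊕ (G ⊕ G)) :
    (termVars a j).count t ≤ 1 :=
  Multiset.nodup_iff_count_le_one.1 (by simp [termVars]) t

theorem mul_mul_mul_eq_prod_termVars (a b j k : G) (ω : Ω) :
    c a ω * u j ω * d j ω * (c b ω * u k ω * d k ω) =
      ((termVars a j + termVars b k).map (Sum.elim c (Sum.elim d u) · ω)).prod := by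
  rw [Multiset.map_add, Multiset.prod_add, ← mul_mul_eq_prod_termVars, ← mul_mul_eq_prod_termVars]

variable [MeasurableSpace Ω] {μ : Measure Ω}

theorem integrable_term_mul_term (hg : iIndepFun (Sum.elim c (Sum.elim d u)) μ)
    (hgm : ∀ t, Measurable (Sum.elim c (Sum.elim d u) t))
    (hgL2 : ∀ t, MemLp (Sum.elim c (Sum.elim d u) t) 2 μ) (a b j k : G) :
    Integrable (fun ω => c a ω * u j ω * d j ω * (c b ω * u k ω * d k ω)) μ := by
  classical
  simp_rw [mul_mul_mul_eq_prod_termVars]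
  refine hg.integrable_multisetProd hgm hgL2 fun t => ?_
  rw [Multiset.count_add]
  linarith [count_termVars_le_one a j t, count_termVars_le_one b k t]

theorem memLp_term (hg : iIndepFun (Sum.elim c (Sum.elim d u)) μ)
    (hgm : ∀ t, Measurable (Sum.elim c (Sum.elim d u) t))
    (hgL2 : ∀ t, MemLp (Sum.elim c (Sum.elim d u) t) 2 μ) (a j : G) :
    MemLp (fun ω => c a ω * u j ω * d j ω) 2 μ := by
  refine (memLp_two_iff_integrable_sq ?_).2 ?_
  · have := fun t => (hgm t).aestronglyMeasurable (μ := μ)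
    exact ((this (.inl a)).mul (this (.inr (.inr j)))).mul (this (.inr (.inl j)))
  · simpa only [sq] using integrable_term_mul_term hg hgm hgL2 a a j j

theorem integral_term_eq_zero (hg : iIndepFun (Sum.elim c (Sum.elim d u)) μ)
    (hgm : ∀ t, Measurable (Sum.elim c (Sum.elim d u) t)) (hd : ∫ ω, d j ω ∂μ = 0) (a : G) :
    ∫ ω, c a ω * u j ω * d j ω ∂μ = 0 := by
  classical
  simp_rw [mul_mul_eq_prod_termVars]
  exact hg.integral_multisetProd_eq_zero hgm (t := .inr (.inl j)) (by simp [termVars]) hd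

theorem integral_term_mul_term_of_ne (hg : iIndepFun (Sum.elim c (Sum.elim d u)) μ)
    (hgm : ∀ t, Measurable (Sum.elim c (Sum.elim d u) t)) (hd : ∫ ω, d j ω ∂μ = 0)
    (hjk : j ≠ k) (a b : G) :
    ∫ ω, c a ω * u j ω * d j ω * (c b ω * u k ω * d k ω) ∂μ = 0 := by
  classical
  simp_rw [mul_mul_mul_eq_prod_termVars]
  exact hg.integral_multisetProd_eq_zero hgm (t := .inr (.inl j))
    (by simp [termVars, hjk]) hd

theorem integral_term_mul_term_of_weight_ne (hg : iIndepFun (Sum.elim c (Sum.elim d u)) μ)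
    (hgm : ∀ t, Measurable (Sum.elim c (Sum.elim d u) t)) (hc : ∫ ω, c a ω ∂μ = 0)
    (hab : a ≠ b) (j : G) :
    ∫ ω, c a ω * u j ω * d j ω * (c b ω * u j ω * d j ω) ∂μ = 0 := by
  classical
  simp_rw [mul_mul_mul_eq_prod_termVars]
  exact hg.integral_multisetProd_eq_zero hgm (t := .inl a)
    (by simp [termVars, hab]) hc

theorem integral_term_mul_self (hg : iIndepFun (Sum.elim c (Sum.elim d u)) μ)
    (hgm : ∀ t, Measurable (Sum.elim c (Sum.elim d u) t)) (a j : G) :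
    ∫ ω, c a ω * u j ω * d j ω * (c a ω * u j ω * d j ω) ∂μ =
      (∫ ω, c a ω ^ 2 ∂μ) * (∫ ω, u j ω ^ 2 ∂μ) * ∫ ω, d j ω ^ 2 ∂μ := by
  classical
  simp_rw [mul_mul_mul_eq_prod_termVars]
  rw [hg.integral_multisetProd hgm]
  simp [termVars, mul_assoc]

end diagCirc

variable [MeasurableSpace Ω] {μ : Measure Ω} [AddGroup G] [Fintype G]

theorem memLp_diagCirc (hg : iIndepFun (Sum.elim c (Sum.elim d u)) μ)
    (hgm : ∀ t, Measurable (Sum.elim c (Sum.elim d u) t))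
    (hgL2 : ∀ t, MemLp (Sum.elim c (Sum.elim d u) t) 2 μ) (i : G) :
    MemLp (diagCirc c d u i) 2 μ :=
  have := hg.isProbabilityMeasure
  memLp_finsetSum _ fun j _ => diagCirc.memLp_term hg hgm hgL2 (j - i) j

theorem integral_diagCirc (hg : iIndepFun (Sum.elim c (Sum.elim d u)) μ)
    (hgm : ∀ t, Measurable (Sum.elim c (Sum.elim d u) t))
    (hgL2 : ∀ t, MemLp (Sum.elim c (Sum.elim d u) t) 2 μ) (hd : ∀ j, ∫ ω, d j ω ∂μ = 0)
    (i : G) :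
    ∫ ω, diagCirc c d u i ω ∂μ = 0 := by
  have := hg.isProbabilityMeasure
  simp only [diagCirc]
  rw [integral_finsetSum _ fun j _ =>
    (diagCirc.memLp_term hg hgm hgL2 (j - i) j).integrable one_le_two]
  exact Finset.sum_eq_zero fun j _ => diagCirc.integral_term_eq_zero hg hgm (hd j) _

theorem integral_diagCirc_mul (hg : iIndepFun (Sum.elim c (Sum.elim d u)) μ)
    (hgm : ∀ t, Measurable (Sum.elim c (Sum.elim d u) t))
    (hgL2 : ∀ t, MemLp (Sum.elim c (Sum.elim d u) t) 2 μ) (i i' : G) :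
    ∫ ω, diagCirc c d u i ω * diagCirc c d u i' ω ∂μ =
      ∑ j, ∑ k, ∫ ω, c (j - i) ω * u j ω * d j ω * (c (k - i') ω * u k ω * d k ω) ∂μ := by
  have := hg.isProbabilityMeasure
  have hint := diagCirc.integrable_term_mul_term hg hgm hgL2
  simp_rw [diagCirc, Finset.sum_mul_sum]
  rw [integral_finsetSum _ fun j _ => integrable_finsetSum _ fun k _ => hint _ _ j k]
  exact Finset.sum_congr rfl fun j _ => integral_finsetSum _ fun k _ => hint _ _ j k

theorem integral_diagCirc_mul_of_ne (hg : iIndepFun (Sum.elim c (Sum.elim d u)) μ)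
    (hgm : ∀ t, Measurable (Sum.elim c (Sum.elim d u) t))
    (hgL2 : ∀ t, MemLp (Sum.elim c (Sum.elim d u) t) 2 μ) (hc : ∀ a, ∫ ω, c a ω ∂μ = 0)
    (hd : ∀ j, ∫ ω, d j ω ∂μ = 0) {i i' : G} (hii' : i ≠ i') :
    ∫ ω, diagCirc c d u i ω * diagCirc c d u i' ω ∂μ = 0 := by
  rw [integral_diagCirc_mul hg hgm hgL2]
  refine Finset.sum_eq_zero fun j _ => Finset.sum_eq_zero fun k _ => ?_
  rcases eq_or_ne j k with rfl | hjk
  · exact diagCirc.integral_term_mul_term_of_weight_ne hg hgm (hc _) (by simpa using hii') j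
  · exact diagCirc.integral_term_mul_term_of_ne hg hgm (hd j) hjk _ _

theorem integral_diagCirc_mul_self (hg : iIndepFun (Sum.elim c (Sum.elim d u)) μ)
    (hgm : ∀ t, Measurable (Sum.elim c (Sum.elim d u) t))
    (hgL2 : ∀ t, MemLp (Sum.elim c (Sum.elim d u) t) 2 μ) {s : ℝ}
    (hc2 : ∀ a, ∫ ω, c a ω ^ 2 ∂μ = s) (hd : ∀ j, ∫ ω, d j ω ∂μ = 0)
    (hd2 : ∀ j, ∫ ω, d j ω ^ 2 ∂μ = 1) (i : G) :
    ∫ ω, diagCirc c d u i ω * diagCirc c d u i ω ∂μ = s * ∑ j, ∫ ω, u j ω ^ 2 ∂μ := by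
  rw [integral_diagCirc_mul hg hgm hgL2, Finset.mul_sum]
  refine Finset.sum_congr rfl fun j _ => ?_
  rw [Finset.sum_eq_single j (fun k _ hkj => diagCirc.integral_term_mul_term_of_ne hg hgm (hd j)
    hkj.symm _ _) (by simp), diagCirc.integral_term_mul_self hg hgm, hc2, hd2, mul_one]

end DiagCirc

end ProbabilityTheory

/-- With `u_j = ReLU(x_j)` for square-integrable `x_j` with symmetric laws,
`c_j ~ N(0,σ²)` i.i.d., `d_j` i.i.d. uniform signs, all mutually independent, the
vector `y = DCu` (i.e. `y_i = Σ_j c_{(j−i) mod n} u_j d_j`) has uncorrelated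
coordinates with `var(y_i) = (σ²/2) Σ_j var(x_j)`. -/
theorem diag_circ_relu_cov {Ω : Type*} [MeasurableSpace Ω] (μ : Measure Ω)
    [IsProbabilityMeasure μ] (n : ℕ) [NeZero n]
    (c d x : Fin n → Ω → ℝ) (σ2 : ℝ≥0)
    (hcm : ∀ j, Measurable (c j)) (hdm : ∀ j, Measurable (d j))
    (hxm : ∀ j, Measurable (x j))
    (hc : ∀ j, Measure.map (c j) μ = gaussianReal 0 σ2)
    (hd : ∀ j, Measure.map (d j) μ =
      (2 : ℝ≥0∞)⁻¹ • (Measure.dirac (-1) + Measure.dirac 1))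
    (hxsymm : ∀ j, Measure.map (x j) μ = Measure.map (fun ω => -x j ω) μ)
    (hxL2 : ∀ j, MemLp (x j) 2 μ)
    (hindep : iIndepFun
      (m := fun _ : Fin n ⊕ (Fin n ⊕ Fin n) => (inferInstance : MeasurableSpace ℝ))
      (Sum.elim c (Sum.elim d x)) μ)
    (y : Fin n → Ω → ℝ)
    (hy : ∀ i, y i = fun ω => ∑ j : Fin n, c (j - i) ω * max 0 (x j ω) * d j ω) :
    (∀ i i' : Fin n, i ≠ i' → rcov (y i) (y i') μ = 0) ∧
      (∀ i : Fin n, variance (y i) μ = ((σ2 : ℝ) / 2) * ∑ j, variance (x j) μ) := by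
  set u : Fin n → Ω → ℝ := fun j ω => max 0 (x j ω)
  obtain rfl : y = diagCirc c d u := funext hy
  have hcLaw j : HasLaw (c j) (gaussianReal 0 σ2) μ := ⟨(hcm j).aemeasurable, hc j⟩
  have hdLaw j : HasLaw (d j) _ μ := ⟨(hdm j).aemeasurable, hd j⟩
  have hc0 j : ∫ ω, c j ω ∂μ = 0 := (hcLaw j).integral_eq.trans integral_id_gaussianReal
  have hd0 j : ∫ ω, d j ω ∂μ = 0 := by
    simpa using (hdLaw j).integral_comp_of_inv_two_smul_dirac_add_dirac measurable_id
  have hd2 j : ∫ ω, d j ω ^ 2 ∂μ = 1 := by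
    rw [(hdLaw j).integral_comp_of_inv_two_smul_dirac_add_dirac (f := (· ^ 2)) (by fun_prop)]
    norm_num
  have hg : iIndepFun (Sum.elim c (Sum.elim d u)) μ := by
    convert hindep.comp (Sum.elim (fun _ => id) (Sum.elim (fun _ => id) (fun _ => max 0)))
      (by rintro (_ | _ | _) <;> [exact measurable_id; exact measurable_id;
        exact measurable_const.max measurable_id]) using 1
    ext (_ | _ | _) <;> rfl
  have hgm : ∀ t, Measurable (Sum.elim c (Sum.elim d u) t) :=
    Sum.forall.2 ⟨hcm, Sum.forall.2 ⟨hdm, fun j => measurable_const.max (hxm j)⟩⟩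
  have hgL2 : ∀ t, MemLp (Sum.elim c (Sum.elim d u) t) 2 μ :=
    Sum.forall.2 ⟨fun j => (hcLaw j).memLp_two (memLp_id_gaussianReal 2).integrable_sq,
      Sum.forall.2 ⟨fun j => (hdLaw j).memLp_two (integrable_inv_two_smul_dirac_add_dirac _ _ _),
        fun j => (hxL2 j).zero_max⟩⟩
  refine ⟨fun i i' hii' => ?_, fun i => ?_⟩
  · rw [rcov, integral_diagCirc_mul_of_ne hg hgm hgL2 hc0 hd0 hii',
      integral_diagCirc hg hgm hgL2 hd0, zero_mul, sub_zero]
  · rw [variance_of_integral_eq_zero (memLp_diagCirc hg hgm hgL2 i).aemeasurable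
      (integral_diagCirc hg hgm hgL2 hd0 i)]
    have hu j : ∫ ω, u j ω ^ 2 ∂μ = Var[x j; μ] / 2 :=
      integral_max_zero_sq_eq_variance_div_two (hxsymm j) (hxL2 j)
    simp_rw [sq, integral_diagCirc_mul_self hg hgm hgL2
      (fun a => (hcLaw a).integral_sq_of_gaussianReal) hd0 hd2 i, hu, Finset.mul_sum]
    exact Finset.sum_congr rfl fun j _ => by ring
end

section
/- Let k divide n, and set r_j = 1 for j ∈ {k, 2k, ..., n} and r_j = 0 otherwise. Then for each i ∈ {1,...,n}, the k×k Toeplitz block with entries T^{(i)}_{s,t} = r_{(i + t − s) mod n} (formed from the subsequence of the periodic extension of r as in the circulant construction) is a permutation matrix, and in particular is invertible. -/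
/-!
Since `k ∣ n`, reduction mod `n` does not affect divisibility by `k`, and
`k ∣ i + n + t - s` exactly when `t = s - (i + n)` in `Fin k`. So each row `s` of `T` has a
single `1`, in column `s - (i + n)`: `T` is the matrix of a cyclic shift of `Fin k`.
-/

theorem Matrix.isUnit_permMatrix {n R : Type*} [Fintype n] [DecidableEq n] [Semiring R]
    (σ : Equiv.Perm n) : IsUnit (σ.permMatrix R) := by
  simpa using (Group.isUnit σ⁻¹).map (Matrix.permMatrixHom (n := n) (R := R))

theorem Matrix.eq_permMatrix_of_apply {n R : Type*} [DecidableEq n] [Zero R] [One R]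
    {σ : Equiv.Perm n} {T : Matrix n n R} (hT : ∀ s t, T s t = if σ s = t then 1 else 0) :
    T = σ.permMatrix R := by
  ext s t
  simp [hT, PEquiv.toMatrix_apply]

open Fin.CommRing in
theorem Fin.dvd_add_val_sub_val_iff {k : ℕ} [NeZero k] (a : ℕ) (s t : Fin k)
    (hs : (s : ℕ) ≤ a + t) : k ∣ a + t - s ↔ s - Fin.ofNat k a = t := by
  rw [← Fin.natCast_eq_zero, Nat.cast_sub hs, Nat.cast_add, Fin.cast_val_eq_self,
    Fin.cast_val_eq_self, sub_eq_zero, sub_eq_iff_eq_add, eq_comm, Fin.ofNat_eq_cast, add_comm]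

/-- The key invertibility step of the rank-based circulant decomposition: with `k ∣ n`
and `r_j = 1` iff `j` is a multiple of `k` (so `r` is `n`-periodic), every `k×k`
Toeplitz block `T^{(i)}_{s,t} = r_{(i + t − s) mod n}` (for `i ∈ {1,…,n}`) is a
permutation matrix, hence invertible. -/
theorem toeplitz_block_is_permutation (n k : ℕ) (hk : 0 < k) (hdvd : k ∣ n)
    (r : ℕ → ℂ) (hr : ∀ j, r j = if k ∣ j then 1 else 0)
    (i : ℕ) (hi1 : 1 ≤ i) (hin : i ≤ n)
    (T : Matrix (Fin k) (Fin k) ℂ)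
    (hT : ∀ s t : Fin k, T s t = r ((i + (t : ℕ) + n - (s : ℕ)) % n)) :
    (∃ σ : Equiv.Perm (Fin k), ∀ s t : Fin k, T s t = if σ s = t then 1 else 0) ∧
      IsUnit T := by
  have : NeZero k := ⟨hk.ne'⟩
  have hkn : k ≤ n := Nat.le_of_dvd (hi1.trans hin) hdvd
  have hσ : ∀ s t : Fin k,
      T s t = if Equiv.subRight (Fin.ofNat k (i + n)) s = t then 1 else 0 := by
    intro s t
    -- `k ≤ n` keeps the natural subtraction from truncating
    have hs : (s : ℕ) ≤ i + n + t := by omega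
    have hdvd_iff : k ∣ (i + t + n - s) % n ↔ Equiv.subRight (Fin.ofNat k (i + n)) s = t := by
      rw [Nat.dvd_mod_iff hdvd, add_right_comm]
      exact Fin.dvd_add_val_sub_val_iff _ _ _ hs
    rw [hT, hr]
    exact if_congr hdvd_iff rfl rfl
  exact ⟨⟨_, hσ⟩, Matrix.eq_permMatrix_of_apply hσ ▸ Matrix.isUnit_permMatrix _⟩
end

section
/- Let U ∈ ℂ^{n×n} be a matrix whose last n−k columns are zero, with k dividing n. Then there exist diagonal matrices D_1,...,D_k, a circulant matrix R and the diagonal projection O (O_{ii}=1 for i≤k, else 0) such that U = (Σ_{i=1}^k D_i S^{i−1}) R O, where S is the cyclic shift matrix. -/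
/-- The `n×n` cyclic shift matrix: `S p q = 1` iff `p ≡ q + 1 (mod n)`. -/
def cyclicShift (n : ℕ) [NeZero n] : Matrix (Fin n) (Fin n) ℂ :=
  fun p q => if p = q + 1 then 1 else 0

/-- The circulant matrix `circ(r)`, whose `(p,q)` entry is `r_{(p−q) mod n}`. -/
def circMat {n : ℕ} [NeZero n] (r : Fin n → ℂ) : Matrix (Fin n) (Fin n) ℂ :=
  fun p q => r (p - q)

/-! Reduction `π : Fin n → ZMod k` is additive because `k ∣ n`. The `(p, q)` entry of
`(∑ᵢ diag(Dᵢ) Sⁱ) circ(r)` is `∑ᵢ Dᵢ(p) r(p - i - q)`; for `r` the indicator of `π j = 0` only the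
term with `i = π p - π q` survives. Choosing `Dᵢ(p) = U(p, π p - i)` (column index read in
`{0, …, k - 1}`) therefore gives the entry `U(p, π q)`, which is `U p q` on the first `k` columns;
the projection `O` kills the others, where `U` vanishes. -/

open Fin.NatCast Matrix

section
variable {n : ℕ} [NeZero n]

lemma cyclicShift_pow_apply (m : ℕ) (p q : Fin n) :
    (cyclicShift n ^ m) p q = if p = q + m then 1 else 0 := by
  induction m generalizing q with
  | zero => simp [one_apply]
  | succ m ih =>
    simp only [pow_succ, mul_apply, cyclicShift, mul_ite, mul_one, mul_zero,
      Finset.sum_ite_eq', Finset.mem_univ, if_true, ih]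
    rw [Nat.cast_succ, add_comm (m : Fin n) 1, add_assoc]

lemma sum_diagonal_mul_cyclicShift_pow_mul_circMat_apply {ι : Type*} [Fintype ι]
    (D : ι → Fin n → ℂ) (e : ι → ℕ) (r : Fin n → ℂ) (p q : Fin n) :
    ((∑ i, diagonal (D i) * cyclicShift n ^ e i) * circMat r) p q =
      ∑ i, D i p * r (p - e i - q) := by
  have hshift (i : ι) (t : Fin n) : p = t + (e i : Fin n) ↔ t = p - e i := by
    constructor <;> rintro rfl <;> simp
  rw [mul_apply]
  simp only [Matrix.sum_apply, diagonal_mul, cyclicShift_pow_apply, hshift, circMat,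
    Finset.sum_mul, mul_ite, mul_one, mul_zero, ite_mul, zero_mul]
  rw [Finset.sum_comm]
  simp only [Finset.sum_ite_eq', Finset.mem_univ, if_true]

end

lemma Fin.sum_natCast_zmod {k : ℕ} [NeZero k] {M : Type*} [AddCommMonoid M] (f : ZMod k → M) :
    ∑ i : Fin k, f ((i : ℕ) : ZMod k) = ∑ x, f x := by
  refine Fintype.sum_bijective _ ⟨fun i j hij => Fin.ext ?_, fun x => ⟨⟨x.val, x.val_lt⟩, ?_⟩⟩ _ _
    fun _ => rfl
  · have := congrArg ZMod.val hij
    rwa [ZMod.val_cast_of_lt i.isLt, ZMod.val_cast_of_lt j.isLt] at this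
  · exact ZMod.natCast_zmod_val x

section
variable {n k : ℕ} [NeZero n] (h : k ∣ n)

def finToZMod : Fin n →+ ZMod k where
  toFun p := (p : ℕ)
  map_zero' := by simp
  map_add' a b := by
    rw [Fin.val_add, ← Nat.cast_add, ZMod.natCast_eq_natCast_iff]
    exact (Nat.mod_modEq _ n).of_dvd h

@[simp]
lemma finToZMod_apply (p : Fin n) : finToZMod h p = ((p : ℕ) : ZMod k) := rfl

@[simp]
lemma finToZMod_natCast (m : ℕ) : finToZMod h (m : Fin n) = m := by
  rw [finToZMod_apply, Fin.val_natCast, ZMod.natCast_eq_natCast_iff]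
  exact (Nat.mod_modEq m n).of_dvd h

def dvdIndicator (j : Fin n) : ℂ :=
  if finToZMod h j = 0 then 1 else 0

variable [NeZero k]

def zmodToFin (x : ZMod k) : Fin n :=
  ⟨x.val, x.val_lt.trans_le (Nat.le_of_dvd (Nat.pos_of_neZero n) h)⟩

lemma zmodToFin_finToZMod {q : Fin n} (hq : (q : ℕ) < k) :
    zmodToFin h (finToZMod h q) = q :=
  Fin.ext (ZMod.val_cast_of_lt hq)

def shiftDiagonals (U : Matrix (Fin n) (Fin n) ℂ) (i : Fin k) (p : Fin n) : ℂ :=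
  U p (zmodToFin h (finToZMod h p - (i : ℕ)))

lemma sum_shiftDiagonals_mul_circMat_dvdIndicator_apply (U : Matrix (Fin n) (Fin n) ℂ)
    (p q : Fin n) :
    ((∑ i : Fin k, diagonal (shiftDiagonals h U i) * cyclicShift n ^ (i : ℕ)) *
      circMat (dvdIndicator h)) p q = U p (zmodToFin h (finToZMod h q)) := by
  have hsupport (x : ZMod k) :
      finToZMod h p - x - finToZMod h q = 0 ↔ x = finToZMod h p - finToZMod h q := by
    rw [sub_right_comm, sub_eq_zero, eq_comm]
  rw [sum_diagonal_mul_cyclicShift_pow_mul_circMat_apply]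
  simp only [shiftDiagonals, dvdIndicator, map_sub, finToZMod_natCast, mul_ite, mul_one,
    mul_zero]
  rw [Fin.sum_natCast_zmod (fun x => if finToZMod h p - x - finToZMod h q = 0 then
    U p (zmodToFin h (finToZMod h p - x)) else 0)]
  simp only [hsupport, Finset.sum_ite_eq', Finset.mem_univ, if_true, sub_sub_cancel]

end

/-- Any matrix `U` whose last `n−k` columns vanish (with `k ∣ n`) factors exactly as
`U = (Σ_{i=1}^k D_i S^{i−1}) R O` for some diagonal matrices `D_i`, some circulant
matrix `R`, and the diagonal projection `O` (`O_{ii} = 1` for `i ≤ k`, else `0`). -/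
theorem factor_zero_columns_matrix {n k : ℕ} [NeZero n] (hkn : k ∣ n)
    (U : Matrix (Fin n) (Fin n) ℂ)
    (hU : ∀ p q : Fin n, k ≤ (q : ℕ) → U p q = 0) :
    ∃ (D : Fin k → Fin n → ℂ) (r : Fin n → ℂ),
      U = (∑ i : Fin k, Matrix.diagonal (D i) * (cyclicShift n) ^ (i : ℕ)) * circMat r *
        Matrix.diagonal (fun i : Fin n => if (i : ℕ) < k then 1 else 0) := by
  have : NeZero k := ⟨ne_zero_of_dvd_ne_zero (NeZero.ne n) hkn⟩
  refine ⟨shiftDiagonals hkn U, dvdIndicator hkn, ?_⟩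
  ext p q
  rw [mul_diagonal, sum_shiftDiagonals_mul_circMat_dvdIndicator_apply]
  split_ifs with hq
  · rw [mul_one, zmodToFin_finToZMod hkn hq]
  · rw [mul_zero, hU p q (not_lt.1 hq)]
end
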